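/- Let L > 0 and let γ : ℝ → ℝ³ be a smooth L-periodic curve with ‖γ(s)‖ = 1 and ‖γ'(s)‖ = 1 for all s. Define η(s) := γ(s) × γ'(s) and k_g(s) := ⟨γ''(s), η(s)⟩. Assume there exists A with 0 < A < 2π and ∫₀ᴸ k_g(s) ds = 2π − A. Then the exact identity L² − A(4π − A) = (∫₀ᴸ sqrt(1 + k_g(s)²) ds)² − 4π² − R(k_g) holds, where R(k_g) ≥ 0. -/

import Mathlib

open scoped RealInnerProductSpace

/-- The cross product of two vectors in `ℝ³`. -/
noncomputable def cross3 (a b : EuclideanSpace ℝ (Fin 3)) : EuclideanSpace ℝ (Fin 3) :=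
  WithLp.toLp 2 ![a 1 * b 2 - a 2 * b 1, a 2 * b 0 - a 0 * b 2, a 0 * b 1 - a 1 * b 0]

/-- The intrinsic (spherical) normal `η = γ × γ'` of a curve on the unit sphere. -/
noncomputable def sphNormal (γ : ℝ → EuclideanSpace ℝ (Fin 3)) (s : ℝ) :
    EuclideanSpace ℝ (Fin 3) :=
  cross3 (γ s) (deriv γ s)

/-- The geodesic curvature `k_g = ⟨γ'', η⟩` of a unit-speed curve on the unit sphere. -/
noncomputable def geodCurv (γ : ℝ → EuclideanSpace ℝ (Fin 3)) (s : ℝ) : ℝ :=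
  ⟪deriv (deriv γ) s, sphNormal γ s⟫

/-- The remainder functional `R(k)` for an `L`-periodic function `k`. -/
noncomputable def remainderR (L : ℝ) (k : ℝ → ℝ) : ℝ :=
  ∫ s in (0:ℝ)..L, ∫ σ in (0:ℝ)..L,
    (k s - k σ) ^ 2 /
      (Real.sqrt ((1 + (k s) ^ 2) * (1 + (k σ) ^ 2)) + 1 + k s * k σ)

lemma denom_pos' (a b : ℝ) :
    0 < Real.sqrt ((1 + a ^ 2) * (1 + b ^ 2)) + 1 + a * b := by
  set P := Real.sqrt ((1 + a ^ 2) * (1 + b ^ 2)) with hP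
  have hPnn : 0 ≤ P := Real.sqrt_nonneg _
  have hPsq : P ^ 2 = (1 + a ^ 2) * (1 + b ^ 2) :=
    Real.sq_sqrt (by positivity)
  by_contra hc
  push_neg at hc
  have h1 : 1 + a * b ≤ 0 := by linarith
  have h2 : 0 ≤ P - (1 + a * b) := by linarith
  have h3 : (P + (1 + a * b)) * (P - (1 + a * b)) ≤ 0 :=
    mul_nonpos_of_nonpos_of_nonneg (by linarith) h2
  nlinarith [sq_nonneg (a - b), sq_nonneg a, sq_nonneg b]

lemma key' (a b : ℝ) :
    (a - b) ^ 2 / (Real.sqrt ((1 + a ^ 2) * (1 + b ^ 2)) + 1 + a * b)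
      = Real.sqrt (1 + a ^ 2) * Real.sqrt (1 + b ^ 2) - (1 + a * b) := by
  have hP : Real.sqrt ((1 + a ^ 2) * (1 + b ^ 2))
      = Real.sqrt (1 + a ^ 2) * Real.sqrt (1 + b ^ 2) :=
    Real.sqrt_mul (by positivity) _
  have hD := denom_pos' a b
  rw [div_eq_iff hD.ne', hP]
  have hPsq : (Real.sqrt (1 + a ^ 2) * Real.sqrt (1 + b ^ 2)) ^ 2
      = (1 + a ^ 2) * (1 + b ^ 2) := by
    rw [mul_pow, Real.sq_sqrt (by positivity), Real.sq_sqrt (by positivity)]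
  rw [hP] at *
  nlinarith [hPsq]

lemma contGeodCurv (γ : ℝ → EuclideanSpace ℝ (Fin 3)) (hγ : ContDiff ℝ (⊤ : ℕ∞) γ) :
    Continuous (geodCurv γ) := by
  have h0 : ContDiff ℝ (⊤ : ℕ∞) γ := hγ.of_le (by simp)
  have h1 : ContDiff ℝ (⊤ : ℕ∞) (deriv γ) := (contDiff_infty_iff_deriv.mp h0).2
  have h2 : Continuous (deriv (deriv γ)) := (contDiff_infty_iff_deriv.mp h1).2.continuous
  have hc : ∀ i, Continuous fun s => γ s i := fun i =>
    (EuclideanSpace.proj i : EuclideanSpace ℝ (Fin 3) →L[ℝ] ℝ).continuous.comp hγ.continuous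
  have hc' : ∀ i, Continuous fun s => deriv γ s i := fun i =>
    (EuclideanSpace.proj i : EuclideanSpace ℝ (Fin 3) →L[ℝ] ℝ).continuous.comp h1.continuous
  have hcross : Continuous (sphNormal γ) := by
    unfold sphNormal cross3
    apply (PiLp.continuous_toLp (p := 2) (β := fun _ : Fin 3 => ℝ)).comp
    apply continuous_pi
    intro i
    fin_cases i <;> simp <;>
      exact Continuous.sub (Continuous.mul (hc _) (hc' _)) (Continuous.mul (hc _) (hc' _))
  exact h2.inner hcross

lemma remainderR_eq (L : ℝ) (k : ℝ → ℝ) (hk : Continuous k) :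
    remainderR L k
      = (∫ s in (0:ℝ)..L, Real.sqrt (1 + (k s) ^ 2)) ^ 2
        - (L ^ 2 + (∫ s in (0:ℝ)..L, k s) ^ 2) := by
  set I := ∫ s in (0:ℝ)..L, Real.sqrt (1 + (k s) ^ 2) with hI
  set K := ∫ s in (0:ℝ)..L, k s with hK
  have hsc : Continuous fun s => Real.sqrt (1 + (k s) ^ 2) :=
    Real.continuous_sqrt.comp (by continuity)
  have i1 : IntervalIntegrable (fun σ => Real.sqrt (1 + (k σ) ^ 2)) MeasureTheory.volume 0 L :=
    hsc.intervalIntegrable _ _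
  have i2 : IntervalIntegrable k MeasureTheory.volume 0 L := hk.intervalIntegrable _ _
  have hin : ∀ s : ℝ, (∫ σ in (0:ℝ)..L,
      (k s - k σ) ^ 2 /
        (Real.sqrt ((1 + (k s) ^ 2) * (1 + (k σ) ^ 2)) + 1 + k s * k σ))
      = Real.sqrt (1 + (k s) ^ 2) * I - (L + k s * K) := by
    intro s
    have : (∫ σ in (0:ℝ)..L,
        (k s - k σ) ^ 2 /
          (Real.sqrt ((1 + (k s) ^ 2) * (1 + (k σ) ^ 2)) + 1 + k s * k σ))
        = ∫ σ in (0:ℝ)..L,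
            (Real.sqrt (1 + (k s) ^ 2) * Real.sqrt (1 + (k σ) ^ 2) - (1 + k s * k σ)) := by
      simp_rw [key']
    rw [this, intervalIntegral.integral_sub (i1.const_mul _)
        (intervalIntegrable_const.add (i2.const_mul _)),
      intervalIntegral.integral_const_mul,
      intervalIntegral.integral_add intervalIntegrable_const (i2.const_mul _),
      intervalIntegral.integral_const_mul, intervalIntegral.integral_const]
    simp [hK, hI]
  unfold remainderR
  simp_rw [hin]
  rw [intervalIntegral.integral_sub (i1.mul_const _)
      (intervalIntegrable_const.add (i2.mul_const _)),
    intervalIntegral.integral_mul_const,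
    intervalIntegral.integral_add intervalIntegrable_const (i2.mul_const _),
    intervalIntegral.integral_mul_const, intervalIntegral.integral_const]
  simp [hI, hK]
  ring

theorem reverse_isoperimetric_sphere_exact (L : ℝ) (hL : 0 < L)
    (γ : ℝ → EuclideanSpace ℝ (Fin 3)) (hγ : ContDiff ℝ (⊤ : ℕ∞) γ)
    (hper : Function.Periodic γ L)
    (hsph : ∀ s, ‖γ s‖ = 1) (hunit : ∀ s, ‖deriv γ s‖ = 1)
    (A : ℝ) (hA₀ : 0 < A) (hA₁ : A < 2 * Real.pi)
    (hGB : ∫ s in (0:ℝ)..L, geodCurv γ s = 2 * Real.pi - A) :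
    L ^ 2 - A * (4 * Real.pi - A)
      = (∫ s in (0:ℝ)..L, Real.sqrt (1 + (geodCurv γ s) ^ 2)) ^ 2
        - 4 * Real.pi ^ 2 - remainderR L (geodCurv γ) ∧
    0 ≤ remainderR L (geodCurv γ) := by
  have hk := contGeodCurv γ hγ
  have hR := remainderR_eq L (geodCurv γ) hk
  rw [hGB] at hR
  constructor
  · rw [hR]; ring
  · unfold remainderR
    apply intervalIntegral.integral_nonneg hL.le
    intro s _
    apply intervalIntegral.integral_nonneg hL.le
    intro σ _
    exact div_nonneg (sq_nonneg _) (denom_pos' _ _).le
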